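/- Let N ≥ 1 and let μ and ν be finite Borel measures on the unit sphere S^{N-1} of Euclidean space ℝ^N. Then the following are equivalent: (i) for every nonempty compact convex set K ⊆ ℝ^N with K = −K one has ∫_{S^{N-1}} h_K dμ ≥ ∫_{S^{N-1}} h_K dν, where h_K(z) = sup_{x∈K} ⟪x, z⟫; (ii) the symmetrization Sym(μ) = ½(μ + a_*μ) linearly majorizes Sym(ν) = ½(ν + a_*ν), where a_*μ denotes the pushforward of μ under the antipodal map a(z) = −z of S^{N-1}. (Symmetric dual-cone description over Minkowski balls.) -/

import Mathlib

open MeasureTheory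

/-- The unit sphere `S^{N-1}` of Euclidean space `ℝ^N`. -/
abbrev UnitSphere (N : ℕ) : Set (EuclideanSpace ℝ (Fin N)) :=
  Metric.sphere (0 : EuclideanSpace ℝ (Fin N)) 1

/-- `LinMaj N μ ν` : the measure `μ` linearly majorizes the measure `ν` on the unit
sphere `S^{N-1}`. -/
def LinMaj (N : ℕ) (μ ν : Measure (UnitSphere N)) : Prop :=
  ∀ (m : ℕ) (U : Fin m → Set (UnitSphere N)),
    (∀ k, MeasurableSet (U k)) →
    (Pairwise fun i j => Disjoint (U i) (U j)) →
    (⋃ k, U k) = Set.univ →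
    ∃ μk : Fin m → Measure (UnitSphere N),
      (∀ k, IsFiniteMeasure (μk k)) ∧
      μ = ∑ k, μk k ∧
      ∀ (k : Fin m) (ℓ : EuclideanSpace ℝ (Fin N) →L[ℝ] ℝ),
        ∫ z, ℓ (z : EuclideanSpace ℝ (Fin N)) ∂(μk k)
          = ∫ z in U k, ℓ (z : EuclideanSpace ℝ (Fin N)) ∂ν

/-- The support function `h_K(z) = sup_{x ∈ K} ⟪x, z⟫` of a set `K ⊆ ℝ^N`. -/
noncomputable def suppFn {N : ℕ} (K : Set (EuclideanSpace ℝ (Fin N)))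
    (z : EuclideanSpace ℝ (Fin N)) : ℝ :=
  sSup ((fun x => (inner ℝ x z : ℝ)) '' K)

/-- Symmetrization `Sym(μ) = ½ (μ + a_* μ)` of a measure on the unit sphere,
where `a(z) = -z` is the antipodal map. -/
noncomputable def symMeasure {N : ℕ} (μ : Measure (UnitSphere N)) :
    Measure (UnitSphere N) :=
  (2 : ENNReal)⁻¹ • (μ + Measure.map (fun z : UnitSphere N => -z) μ)

/-!
For a Minkowski ball `K` the support function is even, so `∫ h_K` is the same against `μ` and
against `Sym(μ)`; for any compact convex `K`, `∫ h_K ∂Sym(μ) = ½ ∫ h_{K - K} ∂μ`, and `K - K` is a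
Minkowski ball. This reduces the theorem to its unsymmetrized form: `∫ h_K ∂ν ≤ ∫ h_K ∂μ` for all
compact convex `K` iff `μ` linearly majorizes `ν`.

If `μ` linearly majorizes `ν`, cut the sphere into small pieces and replace `h_K` on each piece by
the linear function supporting it there. Conversely, the moment vectors `(∫ z ∂μ_k)_k` of the
splittings `μ = ∑ μ_k` form a compact convex set (weak-* compactness of positive functionals on
`L²(μ)`), whose support function in direction `(x_k)_k` is `∫ max_k ⟪x_k, z⟫ ∂μ = ∫ h_P ∂μ` for the
polytope `P = conv {x_k}`. By Hahn–Banach, the target `(∫_{U_k} z ∂ν)_k` lies in that set as soon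
as it passes these tests, and that is the hypothesis applied to `P`.
-/

open Set Metric Function
open scoped RealInnerProductSpace

section SupportFunction

open scoped Pointwise

variable {N : ℕ} {K s t : Set (EuclideanSpace ℝ (Fin N))} {x z : EuclideanSpace ℝ (Fin N)}

lemma bddAbove_image_inner (hK : IsCompact K) (z : EuclideanSpace ℝ (Fin N)) :
    BddAbove ((fun x => ⟪x, z⟫) '' K) :=
  (hK.image (continuous_id.inner (𝕜 := ℝ) continuous_const)).bddAbove

lemma inner_le_suppFn (hK : IsCompact K) (hx : x ∈ K) : ⟪x, z⟫ ≤ suppFn K z :=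
  le_csSup (bddAbove_image_inner hK z) (mem_image_of_mem _ hx)

lemma exists_suppFn_eq_inner (hne : K.Nonempty) (hK : IsCompact K)
    (z : EuclideanSpace ℝ (Fin N)) : ∃ x ∈ K, suppFn K z = ⟪x, z⟫ := by
  obtain ⟨x, hx, hmax⟩ :=
    hK.exists_isMaxOn hne (continuous_id.inner (𝕜 := ℝ) continuous_const).continuousOn
  refine ⟨x, hx, IsGreatest.csSup_eq ⟨mem_image_of_mem _ hx, ?_⟩⟩
  rintro _ ⟨y, hy, rfl⟩
  exact hmax hy

lemma continuous_suppFn (hK : IsCompact K) : Continuous (suppFn K) :=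
  hK.continuous_sSup (f := fun z x => ⟪x, z⟫) (continuous_snd.inner continuous_fst)

lemma suppFn_eq_sSup_image_innerSL (K : Set (EuclideanSpace ℝ (Fin N)))
    (z : EuclideanSpace ℝ (Fin N)) : suppFn K z = sSup (innerSL ℝ z '' K) := by
  simp only [suppFn, real_inner_comm z]
  rfl

lemma suppFn_add (hs : s.Nonempty) (hs' : IsCompact s) (ht : t.Nonempty) (ht' : IsCompact t)
    (z : EuclideanSpace ℝ (Fin N)) : suppFn (s + t) z = suppFn s z + suppFn t z := by
  have hbdd {K : Set (EuclideanSpace ℝ (Fin N))} (hK : IsCompact K) :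
      BddAbove (innerSL ℝ z '' K) :=
    (hK.image (innerSL ℝ z).continuous).bddAbove
  simp only [suppFn_eq_sSup_image_innerSL]
  rw [image_add, csSup_add (hs.image _) (hbdd hs') (ht.image _) (hbdd ht')]

lemma suppFn_neg (K : Set (EuclideanSpace ℝ (Fin N))) (z : EuclideanSpace ℝ (Fin N)) :
    suppFn (-K) z = suppFn K (-z) := by
  simp only [suppFn, ← image_neg_eq_neg, image_image, inner_neg_left, inner_neg_right]

lemma suppFn_sub (hs : s.Nonempty) (hs' : IsCompact s) (ht : t.Nonempty) (ht' : IsCompact t)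
    (z : EuclideanSpace ℝ (Fin N)) : suppFn (s - t) z = suppFn s z + suppFn t (-z) := by
  rw [sub_eq_add_neg, suppFn_add hs hs' ht.neg ht'.neg, suppFn_neg]

lemma suppFn_apply_neg_of_neg_eq (hsym : K = -K) (z : EuclideanSpace ℝ (Fin N)) :
    suppFn K (-z) = suppFn K z := by
  rw [← suppFn_neg, ← hsym]

lemma suppFn_convexHull_range {m : ℕ} [NeZero m] (x : Fin m → EuclideanSpace ℝ (Fin N))
    (z : EuclideanSpace ℝ (Fin N)) :
    suppFn (convexHull ℝ (range x)) z =
      Finset.univ.sup' Finset.univ_nonempty fun k => ⟪x k, z⟫ := by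
  refine le_antisymm (csSup_le ((convexHull_nonempty_iff.2 (range_nonempty x)).image _) ?_)
    (Finset.sup'_le _ _ fun k _ => inner_le_suppFn ((finite_range x).isCompact_convexHull ℝ)
      (subset_convexHull ℝ _ (mem_range_self k)))
  rintro _ ⟨y, hy, rfl⟩
  have hx : range x ⊆ {y | ⟪y, z⟫ ≤ Finset.univ.sup' Finset.univ_nonempty fun k => ⟪x k, z⟫} := by
    rintro _ ⟨k, rfl⟩
    exact Finset.le_sup' (fun k => ⟪x k, z⟫) (Finset.mem_univ k)
  exact convexHull_min hx (convex_halfSpace_le (innerₛₗ ℝ |>.flip z).isLinear _) hy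

lemma exists_suppFn_le_inner_add (hne : K.Nonempty) (hK : IsCompact K) {R : ℝ}
    (hR : ∀ x ∈ K, ‖x‖ ≤ R) (c : EuclideanSpace ℝ (Fin N)) :
    ∃ x ∈ K, ∀ z, suppFn K z ≤ ⟪x, z⟫ + 2 * R * ‖z - c‖ := by
  obtain ⟨x, hx, hxc⟩ := exists_suppFn_eq_inner hne hK c
  refine ⟨x, hx, fun z => ?_⟩
  obtain ⟨y, hy, hyz⟩ := exists_suppFn_eq_inner hne hK z
  have hyc : ⟪y, c⟫ ≤ ⟪x, c⟫ := hxc ▸ inner_le_suppFn hK hy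
  have hy' : ⟪y, z - c⟫ ≤ R * ‖z - c‖ :=
    (real_inner_le_norm y _).trans (mul_le_mul_of_nonneg_right (hR y hy) (norm_nonneg _))
  have hx' : -⟪x, z - c⟫ ≤ R * ‖z - c‖ :=
    (neg_le_abs _).trans <| (abs_real_inner_le_norm x _).trans
      (mul_le_mul_of_nonneg_right (hR x hx) (norm_nonneg _))
  rw [inner_sub_right] at hy' hx'
  linarith

end SupportFunction

section FinitePartitions

variable {α : Type*} [MeasurableSpace α]

lemma exists_measurable_partition_subset {ι : Type*} [LinearOrder ι] [LocallyFiniteOrderBot ι]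
    {W : ι → Set α} (hW : ∀ k, MeasurableSet (W k)) (hcover : ⋃ k, W k = univ) :
    ∃ U : ι → Set α, (∀ k, MeasurableSet (U k)) ∧ Pairwise (Disjoint on U) ∧
      ⋃ k, U k = univ ∧ ∀ k, U k ⊆ W k :=
  ⟨disjointed W, fun k => disjointedRec (fun _ _ ht => ht.diff (hW _)) (hW k),
    disjoint_disjointed W, iUnion_disjointed.trans hcover, disjointed_subset W⟩

lemma exists_fin_measurable_partition_subset_ball {X : Type*} [PseudoMetricSpace X]
    [CompactSpace X] [MeasurableSpace X] [OpensMeasurableSpace X] {δ : ℝ} (hδ : 0 < δ) :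
    ∃ (m : ℕ) (c : Fin m → X) (U : Fin m → Set X), (∀ k, MeasurableSet (U k)) ∧
      Pairwise (Disjoint on U) ∧ ⋃ k, U k = univ ∧ ∀ k, U k ⊆ ball (c k) δ := by
  obtain ⟨t, -, ht, hcover⟩ := finite_cover_balls_of_compact (isCompact_univ (X := X)) hδ
  obtain ⟨m, c, -, rfl⟩ := ht.fin_param
  rw [biUnion_range, univ_subset_iff] at hcover
  exact ⟨m, c, exists_measurable_partition_subset (fun _ => measurableSet_ball) hcover⟩

lemma integral_eq_sum_setIntegral {E : Type*} [NormedAddCommGroup E] [NormedSpace ℝ E]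
    {ι : Type*} [Fintype ι] {μ : Measure α} {U : ι → Set α} (hU : ∀ k, MeasurableSet (U k))
    (hdisj : Pairwise (Disjoint on U)) (hcover : ⋃ k, U k = univ) {f : α → E}
    (hf : Integrable f μ) : ∫ x, f x ∂μ = ∑ k, ∫ x in U k, f x ∂μ := by
  rw [← integral_iUnion_fintype hU hdisj fun k => hf.integrableOn, hcover, setIntegral_univ]

end FinitePartitions

lemma Continuous.integrable_of_compactSpace {X E : Type*} [TopologicalSpace X] [CompactSpace X]
    [MeasurableSpace X] [OpensMeasurableSpace X] [NormedAddCommGroup E] {μ : Measure X}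
    [IsFiniteMeasure μ] {f : X → E} (hf : Continuous f) : Integrable f μ :=
  hf.integrable_of_hasCompactSupport (HasCompactSupport.of_compactSpace f)

section Symmetrization

open scoped Pointwise

variable {N : ℕ}

instance (μ : Measure (UnitSphere N)) [IsFiniteMeasure μ] : IsFiniteMeasure (symMeasure μ) :=
  Measure.smul_finite _ (by simp)

lemma integral_symMeasure (μ : Measure (UnitSphere N)) [IsFiniteMeasure μ]
    {f : UnitSphere N → ℝ} (hf : Continuous f) :
    ∫ z, f z ∂symMeasure μ = 2⁻¹ * (∫ z, f z ∂μ + ∫ z, f (-z) ∂μ) := by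
  have hneg : Measurable fun z : UnitSphere N => -z := continuous_neg.measurable
  rw [symMeasure, integral_smul_measure, integral_add_measure hf.integrable_of_compactSpace
      hf.integrable_of_compactSpace, integral_map hneg.aemeasurable hf.aestronglyMeasurable]
  simp [smul_eq_mul]

lemma integral_symMeasure_of_even (μ : Measure (UnitSphere N)) [IsFiniteMeasure μ]
    {f : UnitSphere N → ℝ} (hf : Continuous f) (heven : ∀ z, f (-z) = f z) :
    ∫ z, f z ∂symMeasure μ = ∫ z, f z ∂μ := by
  rw [integral_symMeasure μ hf]
  simp only [heven]
  ring

lemma integral_suppFn_symMeasure {K : Set (EuclideanSpace ℝ (Fin N))} (hne : K.Nonempty)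
    (hK : IsCompact K) (μ : Measure (UnitSphere N)) [IsFiniteMeasure μ] :
    ∫ z, suppFn K z ∂symMeasure μ = 2⁻¹ * ∫ z, suppFn (K - K) z ∂μ := by
  have hf : Continuous fun z : UnitSphere N => suppFn K z :=
    (continuous_suppFn hK).comp continuous_subtype_val
  have hf' : Continuous fun z : UnitSphere N => suppFn K ↑(-z) := hf.comp continuous_neg
  rw [integral_symMeasure μ hf, ← integral_add hf.integrable_of_compactSpace
    hf'.integrable_of_compactSpace]
  simp only [coe_neg_sphere, suppFn_sub hne hK hne hK]

lemma integral_suppFn_symMeasure_of_neg_eq {K : Set (EuclideanSpace ℝ (Fin N))} (hK : IsCompact K)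
    (hsym : K = -K) (μ : Measure (UnitSphere N)) [IsFiniteMeasure μ] :
    ∫ z, suppFn K z ∂symMeasure μ = ∫ z, suppFn K z ∂μ :=
  integral_symMeasure_of_even μ ((continuous_suppFn hK).comp continuous_subtype_val)
    fun z => suppFn_apply_neg_of_neg_eq hsym z

lemma integral_suppFn_symMeasure_le {μ ν : Measure (UnitSphere N)} [IsFiniteMeasure μ]
    [IsFiniteMeasure ν] (h : ∀ K : Set (EuclideanSpace ℝ (Fin N)),
      K.Nonempty → IsCompact K → Convex ℝ K → K = -K → ∫ z, suppFn K z ∂ν ≤ ∫ z, suppFn K z ∂μ)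
    {K : Set (EuclideanSpace ℝ (Fin N))} (hne : K.Nonempty) (hK : IsCompact K)
    (hconv : Convex ℝ K) : ∫ z, suppFn K z ∂symMeasure ν ≤ ∫ z, suppFn K z ∂symMeasure μ := by
  have hKK : IsCompact (K - K) := by simpa only [sub_eq_add_neg] using hK.add hK.neg
  rw [integral_suppFn_symMeasure hne hK, integral_suppFn_symMeasure hne hK]
  exact mul_le_mul_of_nonneg_left
    (h (K - K) (hne.sub hne) hKK (hconv.sub hconv) (neg_sub K K).symm) (by norm_num)

end Symmetrization

section LinMajImpliesDomination

open Filter Topology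

variable {N : ℕ} {μ ν : Measure (UnitSphere N)} [IsFiniteMeasure ν]
  {K : Set (EuclideanSpace ℝ (Fin N))}

lemma continuous_inner_coe_sphere (x : EuclideanSpace ℝ (Fin N)) :
    Continuous fun z : UnitSphere N => ⟪x, (z : EuclideanSpace ℝ (Fin N))⟫ :=
  continuous_const.inner continuous_subtype_val

lemma setIntegral_suppFn_le_of_subset_ball (hne : K.Nonempty) (hK : IsCompact K) {R : ℝ}
    (hR : ∀ x ∈ K, ‖x‖ ≤ R) {U : Set (UnitSphere N)} (hU : MeasurableSet U) {c : UnitSphere N}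
    {δ : ℝ} (hUc : U ⊆ ball c δ) {ρ : Measure (UnitSphere N)} [IsFiniteMeasure ρ]
    (hmom : ∀ ℓ : EuclideanSpace ℝ (Fin N) →L[ℝ] ℝ,
      ∫ z, ℓ (z : EuclideanSpace ℝ (Fin N)) ∂ρ = ∫ z in U, ℓ (z : EuclideanSpace ℝ (Fin N)) ∂ν) :
    ∫ z in U, suppFn K z ∂ν ≤ ∫ z, suppFn K z ∂ρ + 2 * R * δ * ν.real U := by
  have hR0 : 0 ≤ R := (norm_nonneg _).trans (hR _ hne.some_mem)
  have hf : Continuous fun z : UnitSphere N => suppFn K z :=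
    (continuous_suppFn hK).comp continuous_subtype_val
  obtain ⟨x, hx, hle⟩ := exists_suppFn_le_inner_add hne hK hR c
  have hlin := continuous_inner_coe_sphere x
  have hnear : ∀ z ∈ U, suppFn K z ≤ ⟪x, (z : EuclideanSpace ℝ (Fin N))⟫ + 2 * R * δ := by
    intro z hz
    have hzc : ‖(z : EuclideanSpace ℝ (Fin N)) - c‖ ≤ δ := (mem_ball_iff_norm.1 (hUc hz)).le
    exact (hle z).trans (by gcongr)
  calc ∫ z in U, suppFn K z ∂ν
      ≤ ∫ z in U, (⟪x, (z : EuclideanSpace ℝ (Fin N))⟫ + 2 * R * δ) ∂ν :=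
        setIntegral_mono_on hf.integrable_of_compactSpace.integrableOn
          (hlin.add continuous_const).integrable_of_compactSpace.integrableOn hU hnear
    _ = ∫ z, ⟪x, (z : EuclideanSpace ℝ (Fin N))⟫ ∂ρ + 2 * R * δ * ν.real U := by
        rw [integral_add hlin.integrable_of_compactSpace (integrable_const _), setIntegral_const,
          smul_eq_mul, mul_comm (ν.real U)]
        simpa using (hmom (innerSL ℝ x)).symm
    _ ≤ ∫ z, suppFn K z ∂ρ + 2 * R * δ * ν.real U := by
        grw [integral_mono hlin.integrable_of_compactSpace hf.integrable_of_compactSpace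
          fun z => inner_le_suppFn hK hx]

lemma integral_suppFn_le_add_of_linMaj (h : LinMaj N μ ν) (hne : K.Nonempty) (hK : IsCompact K)
    {R : ℝ} (hR : ∀ x ∈ K, ‖x‖ ≤ R) {δ : ℝ} (hδ : 0 < δ) :
    ∫ z, suppFn K z ∂ν ≤ ∫ z, suppFn K z ∂μ + 2 * R * δ * ν.real univ := by
  obtain ⟨m, c, U, hU, hdisj, hcover, hball⟩ :=
    exists_fin_measurable_partition_subset_ball (X := UnitSphere N) hδ
  obtain ⟨μk, hfin, hsum, hmom⟩ := h m U hU hdisj hcover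
  have hf : Continuous fun z : UnitSphere N => suppFn K z :=
    (continuous_suppFn hK).comp continuous_subtype_val
  calc ∫ z, suppFn K z ∂ν
      = ∑ k, ∫ z in U k, suppFn K z ∂ν :=
        integral_eq_sum_setIntegral hU hdisj hcover hf.integrable_of_compactSpace
    _ ≤ ∑ k, (∫ z, suppFn K z ∂μk k + 2 * R * δ * ν.real (U k)) :=
        Finset.sum_le_sum fun k _ =>
          setIntegral_suppFn_le_of_subset_ball hne hK hR (hU k) (hball k) (hmom k)
    _ = ∫ z, suppFn K z ∂μ + 2 * R * δ * ν.real univ := by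
        rw [Finset.sum_add_distrib, ← Finset.mul_sum, ← measureReal_iUnion_fintype hdisj hU, hcover,
          hsum, integral_finsetSum_measure fun k _ => hf.integrable_of_compactSpace]

theorem integral_suppFn_le_of_linMaj (h : LinMaj N μ ν) (hne : K.Nonempty) (hK : IsCompact K) :
    ∫ z, suppFn K z ∂ν ≤ ∫ z, suppFn K z ∂μ := by
  obtain ⟨R, -, hR⟩ := hK.isBounded.exists_pos_norm_le
  have hlim : Tendsto (fun δ => ∫ z, suppFn K z ∂μ + 2 * R * δ * ν.real univ) (𝓝[>] 0)
      (𝓝 (∫ z, suppFn K z ∂μ)) :=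
    (Continuous.tendsto' (by fun_prop) 0 _ (by simp)).mono_left nhdsWithin_le_nhds
  exact ge_of_tendsto hlim (eventually_nhdsWithin_of_forall fun δ hδ =>
    integral_suppFn_le_add_of_linMaj h hne hK hR hδ)

end LinMajImpliesDomination

section WithDensity

variable {α κ : Type*} [MeasurableSpace α] (μ : Measure α) [Fintype κ]

lemma sum_withDensity_ofReal_eq {ρ : κ → α → ℝ} (hρ : ∀ k, AEMeasurable (ρ k) μ)
    (hρ0 : ∀ k, 0 ≤ᵐ[μ] ρ k) (hρ1 : (fun x => ∑ k, ρ k x) =ᵐ[μ] 1) :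
    ∑ k, μ.withDensity (fun x => ENNReal.ofReal (ρ k x)) = μ := by
  ext s hs
  have hρ1' : (fun x => ∑ k, ENNReal.ofReal (ρ k x)) =ᵐ[μ] 1 := by
    filter_upwards [ae_all_iff.2 hρ0, hρ1] with x hx0 hx1
    simp only [Pi.one_apply] at hx1 ⊢
    rw [← ENNReal.ofReal_sum_of_nonneg fun k _ => hx0 k, hx1, ENNReal.ofReal_one]
  simp only [Measure.coe_finsetSum, Finset.sum_apply, withDensity_apply _ hs]
  rw [← lintegral_finsetSum' _ fun k _ => (hρ k).ennreal_ofReal.restrict,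
    lintegral_congr_ae (ae_restrict_of_ae hρ1'), Pi.one_def, setLIntegral_const, one_mul]

lemma integral_withDensity_ofReal {ρ : α → ℝ} (hρ : AEMeasurable ρ μ) (hρ0 : 0 ≤ᵐ[μ] ρ)
    (g : α → ℝ) : ∫ x, g x ∂μ.withDensity (fun x => ENNReal.ofReal (ρ x)) = ∫ x, ρ x * g x ∂μ := by
  rw [integral_withDensity_eq_integral_toReal_smul₀ hρ.ennreal_ofReal
    (ae_of_all _ fun _ => ENNReal.ofReal_lt_top)]
  refine integral_congr_ae ?_
  filter_upwards [hρ0] with x hx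
  rw [ENNReal.toReal_ofReal hx, smul_eq_mul]

end WithDensity

section PartitionFunctionals

variable {α : Type*} [MeasurableSpace α] (μ : Measure α) (κ : Type*) [Fintype κ]

/-- Tuples of positive functionals on `L²(μ)` adding up to integration against `μ`: the dual
picture of a splitting `μ = ∑ k, μ k`. The norm bound, automatic for such tuples, is imposed to
make the set weak-* compact. -/
def partitionFunctionals : Set (κ → WeakDual ℝ (Lp ℝ 2 μ)) :=
  {T | (∀ k, T k ∈ WeakDual.toStrongDual ⁻¹' closedBall 0 (μ.real univ ^ (2⁻¹ : ℝ))) ∧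
    (∀ k (f : Lp ℝ 2 μ), 0 ≤ᵐ[μ] f → 0 ≤ T k f) ∧ ∀ f : Lp ℝ 2 μ, ∑ k, T k f = ∫ x, f x ∂μ}

lemma isCompact_partitionFunctionals : IsCompact (partitionFunctionals μ κ) := by
  have hball := WeakDual.isCompact_closedBall (𝕜 := ℝ) (0 : StrongDual ℝ (Lp ℝ 2 μ))
    (μ.real univ ^ (2⁻¹ : ℝ))
  have heval (k : κ) (f : Lp ℝ 2 μ) : Continuous fun T : κ → WeakDual ℝ (Lp ℝ 2 μ) => T k f :=
    (WeakDual.eval_continuous f).comp (continuous_apply k)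
  refine (isCompact_univ_pi fun _ => hball).of_isClosed_subset ?_ fun T hT => mem_univ_pi.2 hT.1
  simp only [partitionFunctionals, ofPred_and, ofPred_forall]
  refine (isClosed_iInter fun k => hball.isClosed.preimage (continuous_apply k)).inter
    ((isClosed_iInter fun k => isClosed_iInter fun f => ?_).inter
      (isClosed_iInter fun f => isClosed_eq (continuous_finsetSum _ fun k _ => heval k f)
        continuous_const))
  by_cases hf : 0 ≤ᵐ[μ] f
  · simpa [hf] using isClosed_le continuous_const (heval k f)
  · simp [hf]

lemma convex_partitionFunctionals : Convex ℝ (partitionFunctionals μ κ) := by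
  have hball : Convex ℝ (WeakDual.toStrongDual ⁻¹' closedBall (0 : StrongDual ℝ (Lp ℝ 2 μ))
      (μ.real univ ^ (2⁻¹ : ℝ))) :=
    (convex_closedBall _ _).linear_preimage
      (WeakDual.toStrongDual (𝕜 := ℝ) (E := Lp ℝ 2 μ)).toLinearMap
  rintro T ⟨hT₁, hT₂, hT₃⟩ T' ⟨hT'₁, hT'₂, hT'₃⟩ a c ha hc hac
  refine ⟨fun k => hball (hT₁ k) (hT'₁ k) ha hc hac, fun k f hf => ?_, fun f => ?_⟩
  · have := hT₂ k f hf
    have := hT'₂ k f hf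
    change 0 ≤ a * T k f + c * T' k f
    positivity
  · change ∑ k, (a * T k f + c * T' k f) = _
    rw [Finset.sum_add_distrib, ← Finset.mul_sum, ← Finset.mul_sum, hT₃, hT'₃, ← add_mul, hac,
      one_mul]

variable {κ} [IsFiniteMeasure μ]

lemma exists_mem_partitionFunctionals_eq_setIntegral {A : κ → Set α}
    (hA : ∀ k, MeasurableSet (A k)) (hdisj : Pairwise (Disjoint on A)) (hcover : ⋃ k, A k = univ) :
    ∃ T ∈ partitionFunctionals μ κ, ∀ k f, T k f = ∫ x in A k, f x ∂μ := by
  set χ : κ → Lp ℝ 2 μ := fun k => indicatorConstLp 2 (hA k) (measure_ne_top μ _) 1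
  have hχ (k : κ) (f : Lp ℝ 2 μ) :
      StrongDual.toWeakDual (InnerProductSpace.toDual ℝ _ (χ k)) f = ∫ x in A k, f x ∂μ :=
    L2.inner_indicatorConstLp_one _ _ f
  refine ⟨fun k => StrongDual.toWeakDual (InnerProductSpace.toDual ℝ _ (χ k)), ⟨fun k => ?_,
    fun k f hf => ?_, fun f => ?_⟩, hχ⟩
  · have hA_le : μ.real (A k) ≤ μ.real univ := measureReal_mono (subset_univ _)
    simp only [mem_preimage, mem_closedBall, dist_zero_right]
    change ‖InnerProductSpace.toDual ℝ _ (χ k)‖ ≤ _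
    rw [LinearIsometryEquiv.norm_map, norm_indicatorConstLp two_ne_zero ENNReal.ofNat_ne_top,
      norm_one, one_mul, ENNReal.toReal_ofNat, one_div]
    exact Real.rpow_le_rpow measureReal_nonneg hA_le (by norm_num)
  · rw [hχ]
    exact integral_nonneg_of_ae (ae_restrict_of_ae hf)
  · simp only [hχ]
    exact (integral_eq_sum_setIntegral hA hdisj hcover ((Lp.memLp f).integrable one_le_two)).symm

/-- By Riesz representation `T k = ⟪ρ k, ·⟫`; then `ν k := ρ k • μ`. -/
lemma exists_measure_split_of_mem_partitionFunctionals {T : κ → WeakDual ℝ (Lp ℝ 2 μ)}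
    (hT : T ∈ partitionFunctionals μ κ) :
    ∃ ν : κ → Measure α, (∀ k, IsFiniteMeasure (ν k)) ∧ μ = ∑ k, ν k ∧
      ∀ k {g : α → ℝ} (hg : MemLp g 2 μ), T k (hg.toLp g) = ∫ x, g x ∂ν k := by
  obtain ⟨-, hpos, hsum⟩ := hT
  set ρ : κ → Lp ℝ 2 μ :=
    fun k => (InnerProductSpace.toDual ℝ _).symm (WeakDual.toStrongDual (T k))
  have hTρ (k : κ) (f : Lp ℝ 2 μ) : T k f = ⟪ρ k, f⟫ := InnerProductSpace.toDual_symm_apply.symm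
  have hint (k : κ) : Integrable (ρ k) μ := (Lp.memLp _).integrable one_le_two
  have hset (k : κ) {s : Set α} (hs : MeasurableSet s) :
      ∫ x in s, ρ k x ∂μ = T k (indicatorConstLp 2 hs (measure_ne_top μ s) 1) := by
    rw [hTρ, real_inner_comm, L2.inner_indicatorConstLp_one]
  have hρ0 (k : κ) : 0 ≤ᵐ[μ] ρ k := by
    refine ae_nonneg_of_forall_setIntegral_nonneg (hint k) fun s hs _ => hset k hs ▸ hpos k _ ?_
    filter_upwards [indicatorConstLp_coeFn (p := 2) (hs := hs) (hμs := measure_ne_top μ s)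
      (c := (1 : ℝ))] with x hx
    rw [hx]
    exact indicator_nonneg (fun _ _ => zero_le_one) x
  have hρ1 : (fun x => ∑ k, ρ k x) =ᵐ[μ] 1 := by
    refine ae_eq_of_forall_setIntegral_eq_of_sigmaFinite
      (fun s _ _ => (integrable_finsetSum _ fun k _ => hint k).integrableOn)
      (fun s _ _ => (integrable_const 1).integrableOn) fun s hs _ => ?_
    rw [integral_finsetSum _ fun k _ => (hint k).integrableOn]
    simp only [hset _ hs, hsum, integral_indicatorConstLp, Pi.one_apply, setIntegral_const]
  have hmeas (k : κ) : AEMeasurable (ρ k) μ := (Lp.aestronglyMeasurable _).aemeasurable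
  refine ⟨fun k => μ.withDensity fun x => ENNReal.ofReal (ρ k x),
    fun k => isFiniteMeasure_withDensity_ofReal (hint k).2,
    (sum_withDensity_ofReal_eq μ hmeas hρ0 hρ1).symm, fun k g hg => ?_⟩
  rw [hTρ, L2.inner_def, integral_withDensity_ofReal μ (hmeas k) (hρ0 k)]
  refine integral_congr_ae ?_
  filter_upwards [hg.coeFn_toLp] with x hx
  rw [hx, RCLike.inner_apply, conj_trivial, mul_comm]

end PartitionFunctionals

section MomentSplitting

variable {α : Type*} [MeasurableSpace α] {m : ℕ} [NeZero m]

lemma exists_measurable_partition_sup'_eq {f : Fin m → α → ℝ} (hf : ∀ k, Measurable (f k)) :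
    ∃ A : Fin m → Set α, (∀ k, MeasurableSet (A k)) ∧ Pairwise (Disjoint on A) ∧
      ⋃ k, A k = univ ∧ ∀ k, ∀ x ∈ A k, Finset.univ.sup' Finset.univ_nonempty (f · x) = f k x := by
  set M := fun x => Finset.univ.sup' Finset.univ_nonempty (f · x)
  have hM : Measurable M := by
    simpa only [M, ← Finset.sup'_apply] using
      Finset.measurable_sup' Finset.univ_nonempty fun k _ => hf k
  have hcover : ⋃ k, {x | M x ≤ f k x} = univ := by
    refine eq_univ_of_forall fun x => mem_iUnion.2 ?_
    obtain ⟨k, -, hk⟩ := Finset.exists_mem_eq_sup' Finset.univ_nonempty (f · x)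
    exact ⟨k, hk.le⟩
  obtain ⟨A, hA, hdisj, hAcover, hAW⟩ :=
    exists_measurable_partition_subset (fun k => measurableSet_le hM (hf k)) hcover
  exact ⟨A, hA, hdisj, hAcover, fun k x hx =>
    (hAW k hx).antisymm (Finset.le_sup' (f · x) (Finset.mem_univ k))⟩

lemma exists_mem_partitionFunctionals_sum_eq_integral_sup' {ι : Type*} [Fintype ι]
    (μ : Measure α) [IsFiniteMeasure μ] {g : ι → α → ℝ} (hg : ∀ i, Measurable (g i))
    (hg2 : ∀ i, MemLp (g i) 2 μ) (c : Fin m → ι → ℝ) :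
    ∃ T ∈ partitionFunctionals μ (Fin m), ∑ k, ∑ i, c k i * T k ((hg2 i).toLp (g i)) =
      ∫ x, Finset.univ.sup' Finset.univ_nonempty (fun k => ∑ i, c k i * g i x) ∂μ := by
  obtain ⟨A, hA, hdisj, hcover, hmax⟩ := exists_measurable_partition_sup'_eq
    (f := fun k x => ∑ i, c k i * g i x) fun k => Finset.measurable_sum _ fun i _ =>
      (hg i).const_mul _
  obtain ⟨T, hT, hTA⟩ := exists_mem_partitionFunctionals_eq_setIntegral μ hA hdisj hcover
  refine ⟨T, hT, ?_⟩
  set M := fun x => Finset.univ.sup' Finset.univ_nonempty fun k => ∑ i, c k i * g i x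
  have hint (i : ι) : Integrable (g i) μ := (hg2 i).integrable one_le_two
  have hMint : Integrable M μ := by
    rw [← integrableOn_univ, ← hcover, integrableOn_finite_iUnion]
    exact fun k => (integrable_finsetSum _ fun i _ => (hint i).const_mul _).integrableOn.congr_fun
      (fun x hx => (hmax k x hx).symm) (hA k)
  calc ∑ k, ∑ i, c k i * T k ((hg2 i).toLp (g i))
      = ∑ k, ∑ i, c k i * ∫ x in A k, g i x ∂μ := by
        simp only [hTA]
        refine Finset.sum_congr rfl fun k _ => Finset.sum_congr rfl fun i _ => ?_
        rw [integral_congr_ae (ae_restrict_of_ae (hg2 i).coeFn_toLp)]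
    _ = ∑ k, ∫ x in A k, M x ∂μ := by
        refine Finset.sum_congr rfl fun k _ => ?_
        rw [setIntegral_congr_fun (hA k) (hmax k),
          integral_finsetSum _ fun i _ => (hint i).integrableOn.const_mul _]
        simp only [integral_const_mul]
    _ = ∫ x, M x ∂μ := (integral_eq_sum_setIntegral hA hdisj hcover hMint).symm

/-- A Strassen-type theorem. The moments `(∫ g i ∂(ν k))` of all splittings `μ = ∑ k, ν k` form a
compact convex set (the image of `partitionFunctionals`), and the right-hand side of the test is
its support function in direction `c`; so Hahn–Banach separation applies. -/
theorem exists_measure_split_integral_eq {ι : Type*} [Fintype ι] (μ : Measure α)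
    [IsFiniteMeasure μ] {g : ι → α → ℝ} (hg : ∀ i, Measurable (g i))
    (hg2 : ∀ i, MemLp (g i) 2 μ) (b : Fin m → ι → ℝ)
    (h : ∀ c : Fin m → ι → ℝ, ∑ k, ∑ i, c k i * b k i ≤
      ∫ x, Finset.univ.sup' Finset.univ_nonempty (fun k => ∑ i, c k i * g i x) ∂μ) :
    ∃ ν : Fin m → Measure α, (∀ k, IsFiniteMeasure (ν k)) ∧ μ = ∑ k, ν k ∧
      ∀ k i, ∫ x, g i x ∂ν k = b k i := by
  classical
  set moments : (Fin m → WeakDual ℝ (Lp ℝ 2 μ)) → Fin m × ι → ℝ :=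
    fun T p => T p.1 ((hg2 p.2).toLp (g p.2))
  have hcont : Continuous moments :=
    continuous_pi fun p => (WeakDual.eval_continuous _).comp (continuous_apply p.1)
  have hlin : IsLinearMap ℝ moments := ⟨fun _ _ => rfl, fun _ _ => rfl⟩
  suffices hb : (fun p => b p.1 p.2) ∈ moments '' partitionFunctionals μ (Fin m) by
    obtain ⟨T, hT, hTb⟩ := hb
    obtain ⟨ν, hfin, hsum, hν⟩ := exists_measure_split_of_mem_partitionFunctionals μ hT
    exact ⟨ν, hfin, hsum, fun k i => (hν k (hg2 i)).symm.trans (congrFun hTb (k, i))⟩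
  by_contra hb
  obtain ⟨F, u, hFlt, hFb⟩ := geometric_hahn_banach_closed_point
    ((convex_partitionFunctionals μ _).is_linear_image hlin)
    ((isCompact_partitionFunctionals μ _).image hcont).isClosed hb
  set c : Fin m → ι → ℝ := fun k i => F fun q => if (k, i) = q then 1 else 0
  have hF (y : Fin m × ι → ℝ) : F y = ∑ k, ∑ i, c k i * y (k, i) := by
    refine (F.toLinearMap.pi_apply_eq_sum_univ y).trans ?_
    rw [Fintype.sum_prod_type]
    simp [c, mul_comm]
  obtain ⟨T, hT, hTc⟩ := exists_mem_partitionFunctionals_sum_eq_integral_sup' μ hg hg2 c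
  linarith [hFlt _ (mem_image_of_mem moments hT), h c, hF fun p => b p.1 p.2, hF (moments T)]

end MomentSplitting

section DominationImpliesLinMaj

variable {N : ℕ} {μ ν : Measure (UnitSphere N)} [IsFiniteMeasure ν]

lemma integral_coe_sphere_apply (σ : Measure (UnitSphere N)) [IsFiniteMeasure σ] (i : Fin N) :
    (∫ z, (z : EuclideanSpace ℝ (Fin N)) ∂σ) i = ∫ z, (z : EuclideanSpace ℝ (Fin N)) i ∂σ :=
  ((EuclideanSpace.proj (𝕜 := ℝ) i).integral_comp_comm (μ := σ)
    (φ := fun z : UnitSphere N => (z : EuclideanSpace ℝ (Fin N)))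
    continuous_subtype_val.integrable_of_compactSpace).symm

/-- The test of `exists_measure_split_integral_eq`, passed thanks to the polytope with vertices
`c k`. -/
lemma sum_mul_setIntegral_coe_le_integral_sup'
    (h : ∀ K : Set (EuclideanSpace ℝ (Fin N)), K.Nonempty → IsCompact K → Convex ℝ K →
      ∫ z, suppFn K z ∂ν ≤ ∫ z, suppFn K z ∂μ)
    {m : ℕ} [NeZero m] {U : Fin m → Set (UnitSphere N)} (hU : ∀ k, MeasurableSet (U k))
    (hdisj : Pairwise (Disjoint on U)) (hcover : ⋃ k, U k = univ) (c : Fin m → Fin N → ℝ) :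
    ∑ k, ∑ i, c k i * (∫ z in U k, (z : EuclideanSpace ℝ (Fin N)) ∂ν) i ≤
      ∫ z, Finset.univ.sup' Finset.univ_nonempty
        (fun k => ∑ i, c k i * (z : EuclideanSpace ℝ (Fin N)) i) ∂μ := by
  set x : Fin m → EuclideanSpace ℝ (Fin N) := fun k => WithLp.toLp 2 (c k)
  have hx (k : Fin m) (w : EuclideanSpace ℝ (Fin N)) : ⟪x k, w⟫ = ∑ i, c k i * w i := by
    simp [x, PiLp.inner_apply, mul_comm]
  set P := convexHull ℝ (range x)
  have hPK : IsCompact P := (finite_range x).isCompact_convexHull ℝ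
  have hP : Continuous fun z : UnitSphere N => suppFn P z :=
    (continuous_suppFn hPK).comp continuous_subtype_val
  calc ∑ k, ∑ i, c k i * (∫ z in U k, (z : EuclideanSpace ℝ (Fin N)) ∂ν) i
      = ∑ k, ∫ z in U k, ⟪x k, (z : EuclideanSpace ℝ (Fin N))⟫ ∂ν := by
        refine Finset.sum_congr rfl fun k _ => ?_
        rw [integral_inner continuous_subtype_val.integrable_of_compactSpace, hx]
    _ ≤ ∑ k, ∫ z in U k, suppFn P z ∂ν :=
        Finset.sum_le_sum fun k _ => setIntegral_mono
          (continuous_inner_coe_sphere _).integrable_of_compactSpace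
          hP.integrable_of_compactSpace fun z =>
            inner_le_suppFn hPK (subset_convexHull ℝ _ (mem_range_self k))
    _ = ∫ z, suppFn P z ∂ν :=
        (integral_eq_sum_setIntegral hU hdisj hcover hP.integrable_of_compactSpace).symm
    _ ≤ ∫ z, suppFn P z ∂μ :=
        h P (convexHull_nonempty_iff.2 (range_nonempty x)) hPK (convex_convexHull ℝ _)
    _ = _ := by simp only [P, suppFn_convexHull_range, hx]

theorem linMaj_of_forall_integral_suppFn_le [IsFiniteMeasure μ]
    (h : ∀ K : Set (EuclideanSpace ℝ (Fin N)), K.Nonempty → IsCompact K → Convex ℝ K →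
      ∫ z, suppFn K z ∂ν ≤ ∫ z, suppFn K z ∂μ) : LinMaj N μ ν := by
  intro m U hU hdisj hcover
  rcases isEmpty_or_nonempty (Fin m) with hm | hm
  · have : IsEmpty (UnitSphere N) := by simpa [← univ_eq_empty_iff] using hcover.symm
    exact ⟨fun _ => 0, fun _ => inferInstance, (Measure.eq_zero_of_isEmpty μ).trans (by simp),
      isEmptyElim⟩
  have : NeZero m := ⟨by simpa [← Fin.pos_iff_nonempty, ← Nat.pos_iff_ne_zero] using hm⟩
  have hcoord (i : Fin N) : Continuous fun z : UnitSphere N => (z : EuclideanSpace ℝ (Fin N)) i :=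
    (EuclideanSpace.proj i).continuous.comp continuous_subtype_val
  obtain ⟨μk, hfin, hsum, hmom⟩ := exists_measure_split_integral_eq μ
    (fun i => (hcoord i).measurable)
    (fun i => (hcoord i).memLp_of_hasCompactSupport (HasCompactSupport.of_compactSpace _))
    (fun k i => (∫ z in U k, (z : EuclideanSpace ℝ (Fin N)) ∂ν) i)
    (sum_mul_setIntegral_coe_le_integral_sup' h hU hdisj hcover)
  refine ⟨μk, hfin, hsum, fun k ℓ => ?_⟩
  have hmean : ∫ z, (z : EuclideanSpace ℝ (Fin N)) ∂μk k =
      ∫ z in U k, (z : EuclideanSpace ℝ (Fin N)) ∂ν := by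
    ext i
    rw [integral_coe_sphere_apply, hmom]
  rw [ℓ.integral_comp_comm continuous_subtype_val.integrable_of_compactSpace,
    ℓ.integral_comp_comm continuous_subtype_val.integrable_of_compactSpace, hmean]

end DominationImpliesLinMaj

theorem suppFn_integrals_symmetric_iff_linMaj_sym_general {N : ℕ}
    (μ ν : Measure (UnitSphere N)) [IsFiniteMeasure μ] [IsFiniteMeasure ν] :
    (∀ K : Set (EuclideanSpace ℝ (Fin N)),
        K.Nonempty → IsCompact K → Convex ℝ K → K = -K →
        ∫ z, suppFn K (z : EuclideanSpace ℝ (Fin N)) ∂ν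
          ≤ ∫ z, suppFn K (z : EuclideanSpace ℝ (Fin N)) ∂μ) ↔
      LinMaj N (symMeasure μ) (symMeasure ν) := by
  constructor
  · exact fun h => linMaj_of_forall_integral_suppFn_le fun K hne hK hconv =>
      integral_suppFn_symMeasure_le h hne hK hconv
  · intro h K hne hK _ hsym
    rw [← integral_suppFn_symMeasure_of_neg_eq hK hsym ν,
      ← integral_suppFn_symMeasure_of_neg_eq hK hsym μ]
    exact integral_suppFn_le_of_linMaj h hne hK

/-- **Symmetric dual-cone description over Minkowski balls.** For finite Borel measures
`μ, ν` on `S^{N-1}`: `∫ h_K dμ ≥ ∫ h_K dν` for all origin-symmetric nonempty compact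
convex `K` iff `Sym(μ)` linearly majorizes `Sym(ν)`. -/
theorem suppFn_integrals_symmetric_iff_linMaj_sym {N : ℕ} (hN : 1 ≤ N)
    (μ ν : Measure (UnitSphere N)) [IsFiniteMeasure μ] [IsFiniteMeasure ν] :
    (∀ K : Set (EuclideanSpace ℝ (Fin N)),
        K.Nonempty → IsCompact K → Convex ℝ K → K = -K →
        ∫ z, suppFn K (z : EuclideanSpace ℝ (Fin N)) ∂ν
          ≤ ∫ z, suppFn K (z : EuclideanSpace ℝ (Fin N)) ∂μ) ↔
      LinMaj N (symMeasure μ) (symMeasure ν) :=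
  suppFn_integrals_symmetric_iff_linMaj_sym_general μ ν
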